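/- Let (V, e_V) and (W, e_W) be absolute order unit spaces and φ : V → W a surjective linear map. Then φ is an order isometry if and only if φ is a unital isometry. -/

import Mathlib

/-- An absolutely ordered space: a real ordered vector space `(V, P)` together with an
absolute value map `abs : V → P` satisfying axioms (a)–(e). -/
structure AbsOrderedSpace (V : Type*) [AddCommGroup V] [Module ℝ V] where
  /-- the positive cone -/
  P : Set V
  add_mem : ∀ u ∈ P, ∀ v ∈ P, u + v ∈ P
  smul_mem : ∀ (k : ℝ), 0 ≤ k → ∀ v ∈ P, k • v ∈ P
  /-- the absolute value map -/
  abs : V → V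
  abs_mem : ∀ v, abs v ∈ P
  /-- (a) -/
  abs_of_mem : ∀ v ∈ P, abs v = v
  /-- (b) -/
  abs_add_mem : ∀ v, abs v + v ∈ P
  abs_sub_mem : ∀ v, abs v - v ∈ P
  /-- (c) -/
  abs_smul : ∀ (k : ℝ) (v : V), abs (k • v) = |k| • abs v
  /-- (d) -/
  axiom_d : ∀ u v w : V, abs (u - v) = u + v → w ∈ P → v - w ∈ P → abs (u - w) = u + w
  /-- (e) -/
  axiom_e₁ : ∀ u v w : V, abs (u - v) = u + v → abs (u - w) = u + w →
    abs (u - abs (v + w)) = u + abs (v + w)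
  axiom_e₂ : ∀ u v w : V, abs (u - v) = u + v → abs (u - w) = u + w →
    abs (u - abs (v - w)) = u + abs (v - w)
/-- An absolute order unit space: an absolutely ordered space whose norm is the order unit
norm determined by an order unit `e`, with closed cone, satisfying
`‖v‖ ≤ max(‖u‖, ‖w‖)` for `u ≤ v ≤ w`, and in which orthogonality coincides with absolute
`∞`-orthogonality on the positive cone. -/
structure AbsOrderUnitSpace (V : Type*) [NormedAddCommGroup V] [NormedSpace ℝ V] extends
    AbsOrderedSpace V where
  /-- the order unit -/
  e : V
  e_mem : e ∈ P
  cone_closed : IsClosed P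
  /-- `e` is an order unit -/
  orderUnit : ∀ v : V, ∃ k : ℝ, 0 < k ∧ k • e + v ∈ P ∧ k • e - v ∈ P
  /-- the norm is the order unit norm determined by `e` -/
  norm_eq : ∀ v : V, ‖v‖ = sInf {k : ℝ | 0 < k ∧ k • e + v ∈ P ∧ k • e - v ∈ P}
  /-- condition (a): `‖v‖ ≤ max (‖u‖, ‖w‖)` whenever `u ≤ v ≤ w` -/
  norm_le_max : ∀ u v w : V, v - u ∈ P → w - v ∈ P → ‖v‖ ≤ max ‖u‖ ‖w‖
  /-- condition (b): `⊥ = ⊥ᵃ_∞` on the positive cone -/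
  perp_iff : ∀ u ∈ P, ∀ v ∈ P,
    (abs (u - v) = u + v ↔
      ∀ u₁ v₁ : V, u₁ ∈ P → u - u₁ ∈ P → v₁ ∈ P → v - v₁ ∈ P →
        ∀ α β : ℝ, ‖α • u₁ + β • v₁‖ = max ‖α • u₁‖ ‖β • v₁‖)

/-- `l_V(v) = inf {‖u‖ : u ∈ V⁺, u + v ∈ V⁺}`. -/
noncomputable def AbsOrderUnitSpace.ell {V : Type*} [NormedAddCommGroup V]
    [NormedSpace ℝ V] (A : AbsOrderUnitSpace V) (v : V) : ℝ :=
  sInf {r : ℝ | ∃ u ∈ A.P, u + v ∈ A.P ∧ ‖u‖ = r}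


/-!
The order of an absolute order unit space can be read off its norm and conversely: the cone is
the zero set of `ell`, `‖v‖ = max (ell v) (ell (-v))`, and `v ≥ 0` iff `‖‖v‖ e - v‖ ≤ ‖v‖`.
Hence an order isometry is an isometry preserving and reflecting positivity, and so is a unital
isometry; so (being onto) it carries the sets whose infima define `ell` onto each other.
An order isometry `φ` is unital since `φ e ≤ e` by `‖φ e‖ ≤ 1`, while the preimage `u` of `e` is
positive with `‖u‖ ≤ 1`, so `u ≤ e` and `e = φ u ≤ φ e`.
-/

open Filter Topology

namespace AbsOrderUnitSpace

variable {V : Type*} [NormedAddCommGroup V] [NormedSpace ℝ V] (A : AbsOrderUnitSpace V)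

theorem zero_mem : (0 : V) ∈ A.P := by
  simpa using A.smul_mem 0 le_rfl A.e A.e_mem

theorem smul_e_add_mem {k : ℝ} {v : V} (hk : 0 ≤ k) (hv : v ∈ A.P) : k • A.e + v ∈ A.P :=
  A.add_mem _ (A.smul_mem k hk A.e A.e_mem) _ hv

theorem smul_e_add_mem_of_le {k k' : ℝ} {v : V} (hkk : k ≤ k') (h : k • A.e + v ∈ A.P) :
    k' • A.e + v ∈ A.P := by
  have hsum := A.smul_e_add_mem (sub_nonneg.2 hkk) h
  rwa [← add_assoc, ← add_smul, sub_add_cancel] at hsum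

theorem mem_of_forall_pos_smul_e_add_mem {v : V} (h : ∀ ε : ℝ, 0 < ε → ε • A.e + v ∈ A.P) :
    v ∈ A.P := by
  have hcont : Continuous fun ε : ℝ => ε • A.e + v := by fun_prop
  have hlim : Tendsto (fun ε : ℝ => ε • A.e + v) (𝓝[>] 0) (𝓝 v) :=
    (hcont.tendsto' 0 v (by simp)).mono_left nhdsWithin_le_nhds
  exact A.cone_closed.mem_of_tendsto hlim (eventually_nhdsWithin_of_forall h)

theorem smul_e_add_mem_of_norm_le {k : ℝ} {v : V} (hv : ‖v‖ ≤ k) : k • A.e + v ∈ A.P := by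
  refine A.mem_of_forall_pos_smul_e_add_mem fun ε hε => ?_
  obtain ⟨s, ⟨-, hs, -⟩, hs_lt⟩ :=
    exists_lt_of_csInf_lt (A.orderUnit v) (A.norm_eq v ▸ (by linarith : ‖v‖ < k + ε))
  rw [← add_assoc, ← add_smul, add_comm ε]
  exact A.smul_e_add_mem_of_le hs_lt.le hs

theorem norm_le_iff_mem {k : ℝ} {v : V} (hk : 0 ≤ k) :
    ‖v‖ ≤ k ↔ k • A.e + v ∈ A.P ∧ k • A.e - v ∈ A.P := by
  constructor
  · intro hv
    rw [sub_eq_add_neg]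
    exact ⟨A.smul_e_add_mem_of_norm_le hv, A.smul_e_add_mem_of_norm_le ((norm_neg v).trans_le hv)⟩
  · rintro ⟨h_add, h_sub⟩
    refine le_of_forall_pos_le_add fun ε hε => ?_
    rw [A.norm_eq]
    refine csInf_le ⟨0, fun _ hx => hx.1.le⟩ ⟨by linarith, ?_, ?_⟩
    · exact A.smul_e_add_mem_of_le (le_add_of_nonneg_right hε.le) h_add
    · rw [sub_eq_add_neg] at h_sub ⊢
      exact A.smul_e_add_mem_of_le (le_add_of_nonneg_right hε.le) h_sub

theorem norm_smul_e_le {k : ℝ} (hk : 0 ≤ k) : ‖k • A.e‖ ≤ k := by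
  rw [A.norm_le_iff_mem hk, sub_self]
  exact ⟨A.smul_e_add_mem hk (A.smul_mem k hk A.e A.e_mem), A.zero_mem⟩

theorem norm_e_le_one : ‖A.e‖ ≤ 1 := by
  simpa using A.norm_smul_e_le zero_le_one

theorem e_sub_mem_of_norm_le_one {v : V} (hv : ‖v‖ ≤ 1) : A.e - v ∈ A.P := by
  simpa using ((A.norm_le_iff_mem zero_le_one).1 hv).2

theorem eq_zero_of_mem_of_neg_mem {v : V} (hv : v ∈ A.P) (hnv : -v ∈ A.P) : v = 0 := by
  refine norm_le_zero_iff.1 (le_of_forall_pos_le_add fun ε hε => ?_)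
  rw [zero_add, A.norm_le_iff_mem hε.le, sub_eq_add_neg]
  exact ⟨A.smul_e_add_mem hε.le hv, A.smul_e_add_mem hε.le hnv⟩

theorem mem_iff_norm_smul_e_sub_le {v : V} : v ∈ A.P ↔ ‖‖v‖ • A.e - v‖ ≤ ‖v‖ := by
  rw [A.norm_le_iff_mem (norm_nonneg v), sub_sub_cancel]
  exact ⟨fun hv => ⟨A.smul_e_add_mem (norm_nonneg v)
    ((A.norm_le_iff_mem (norm_nonneg v)).1 le_rfl).2, hv⟩, And.right⟩

theorem ell_nonneg (v : V) : 0 ≤ A.ell v :=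
  Real.sInf_nonneg fun _ ⟨u, _, _, hu⟩ => hu ▸ norm_nonneg u

theorem ell_le {u v : V} (hu : u ∈ A.P) (huv : u + v ∈ A.P) : A.ell v ≤ ‖u‖ :=
  csInf_le ⟨0, fun _ ⟨w, _, _, hw⟩ => hw ▸ norm_nonneg w⟩ ⟨u, hu, huv, rfl⟩

theorem exists_lt_of_ell_lt {v : V} {c : ℝ} (h : A.ell v < c) :
    ∃ u ∈ A.P, u + v ∈ A.P ∧ ‖u‖ < c := by
  have hne : {r : ℝ | ∃ u ∈ A.P, u + v ∈ A.P ∧ ‖u‖ = r}.Nonempty :=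
    ⟨_, ‖v‖ • A.e, A.smul_mem _ (norm_nonneg v) _ A.e_mem, A.smul_e_add_mem_of_norm_le le_rfl, rfl⟩
  obtain ⟨_, ⟨u, hu, huv, rfl⟩, hlt⟩ := exists_lt_of_csInf_lt hne h
  exact ⟨u, hu, huv, hlt⟩

theorem ell_le_norm (v : V) : A.ell v ≤ ‖v‖ :=
  (A.ell_le (A.smul_mem _ (norm_nonneg v) _ A.e_mem) (A.smul_e_add_mem_of_norm_le le_rfl)).trans
    (A.norm_smul_e_le (norm_nonneg v))

theorem ell_eq_zero_iff {v : V} : A.ell v = 0 ↔ v ∈ A.P := by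
  constructor
  · intro hv
    refine A.mem_of_forall_pos_smul_e_add_mem fun ε hε => ?_
    obtain ⟨u, hu, huv, hu_lt⟩ := A.exists_lt_of_ell_lt (hv ▸ hε : A.ell v < ε)
    have hεu : ε • A.e - u ∈ A.P := ((A.norm_le_iff_mem hε.le).1 hu_lt.le).2
    convert A.add_mem _ hεu _ huv using 1
    abel
  · intro hv
    exact le_antisymm (by simpa using A.ell_le A.zero_mem (by simpa using hv)) (A.ell_nonneg v)

theorem norm_eq_max_ell (v : V) : ‖v‖ = max (A.ell v) (A.ell (-v)) := by
  refine le_antisymm (le_of_forall_pos_le_add fun ε hε => ?_)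
    (max_le (A.ell_le_norm v) (norm_neg v ▸ A.ell_le_norm (-v)))
  obtain ⟨u, -, huv, hu_lt⟩ := A.exists_lt_of_ell_lt (lt_add_of_pos_right (A.ell v) hε)
  obtain ⟨w, -, hwv, hw_lt⟩ := A.exists_lt_of_ell_lt (lt_add_of_pos_right (A.ell (-v)) hε)
  calc ‖v‖ ≤ max ‖-u‖ ‖w‖ :=
        A.norm_le_max (-u) v w (by simpa [add_comm] using huv)
          (by simpa [sub_eq_add_neg] using hwv)
    _ ≤ max (A.ell v + ε) (A.ell (-v) + ε) := by
        rw [norm_neg]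
        exact max_le_max hu_lt.le hw_lt.le
    _ = max (A.ell v) (A.ell (-v)) + ε := max_add_add_right _ _ _

end AbsOrderUnitSpace

section LinearMap

variable {V W : Type*} [NormedAddCommGroup V] [NormedSpace ℝ V] [NormedAddCommGroup W]
  [NormedSpace ℝ W] {A : AbsOrderUnitSpace V} {B : AbsOrderUnitSpace W} {φ : V →ₗ[ℝ] W}

theorem map_mem_iff_of_ell_map (h : ∀ v, B.ell (φ v) = A.ell v) (v : V) :
    φ v ∈ B.P ↔ v ∈ A.P := by
  rw [← B.ell_eq_zero_iff, ← A.ell_eq_zero_iff, h]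

theorem norm_map_of_ell_map (h : ∀ v, B.ell (φ v) = A.ell v) (v : V) : ‖φ v‖ = ‖v‖ := by
  rw [B.norm_eq_max_ell, A.norm_eq_max_ell, h, ← map_neg, h]

theorem map_mem_iff_of_unital_isometry (hunit : φ A.e = B.e) (hiso : ∀ v, ‖φ v‖ = ‖v‖)
    (v : V) : φ v ∈ B.P ↔ v ∈ A.P := by
  rw [B.mem_iff_norm_smul_e_sub_le, A.mem_iff_norm_smul_e_sub_le, hiso, ← hunit, ← map_smul,
    ← map_sub, hiso]

theorem map_e_of_surjective (hsurj : Function.Surjective φ) (hpos : ∀ v, φ v ∈ B.P ↔ v ∈ A.P)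
    (hiso : ∀ v, ‖φ v‖ = ‖v‖) : φ A.e = B.e := by
  have h_le : B.e - φ A.e ∈ B.P := B.e_sub_mem_of_norm_le_one (hiso A.e ▸ A.norm_e_le_one)
  obtain ⟨u, hu⟩ := hsurj B.e
  have hu_le : A.e - u ∈ A.P := A.e_sub_mem_of_norm_le_one (hiso u ▸ hu ▸ B.norm_e_le_one)
  have h_ge : φ A.e - B.e ∈ B.P := by simpa [hu] using (hpos _).2 hu_le
  exact sub_eq_zero.1 (B.eq_zero_of_mem_of_neg_mem h_ge (by simpa using h_le))

theorem ell_map_of_surjective (hsurj : Function.Surjective φ)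
    (hpos : ∀ v, φ v ∈ B.P ↔ v ∈ A.P) (hiso : ∀ v, ‖φ v‖ = ‖v‖) (v : V) :
    B.ell (φ v) = A.ell v := by
  simp only [AbsOrderUnitSpace.ell, hsurj.exists, ← map_add, hpos, hiso]

end LinearMap

/-- A surjective linear map between absolute order unit spaces is an order isometry iff
it is a unital isometry. -/
theorem orderIsometry_iff_unital_isometry {V W : Type*} [NormedAddCommGroup V]
    [NormedSpace ℝ V] [NormedAddCommGroup W] [NormedSpace ℝ W]
    (A : AbsOrderUnitSpace V) (B : AbsOrderUnitSpace W) (φ : V →ₗ[ℝ] W)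
    (hsurj : Function.Surjective φ) :
    (∀ v : V, B.ell (φ v) = A.ell v) ↔ (φ A.e = B.e ∧ ∀ v : V, ‖φ v‖ = ‖v‖) := by
  constructor
  · intro h
    have hiso := norm_map_of_ell_map h
    exact ⟨map_e_of_surjective hsurj (map_mem_iff_of_ell_map h) hiso, hiso⟩
  · rintro ⟨hunit, hiso⟩
    exact ell_map_of_surjective hsurj (map_mem_iff_of_unital_isometry hunit hiso) hiso
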